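/- arXiv:1505.07742 — 8 statements merged into one kernel-verified Lean document; each statement's English description precedes it below -/
import Mathlib

section
/- For every real α with 0 < α < (√2 - 1)/2 there exists N ∈ ℕ such that for all n ≥ N and every natural number k with k ≤ ⌊αn⌋, one has the strict inequality C(n-k, k) < C(n-(k+1), k+1). -/
/-! Since `C(m-1, k+1) / C(m, k) = (m-k)(m-k-1) / ((k+1) m)`, with `m = n - k` the claim reduces to
`(k+1)(n-k) < (n-2k)(n-2k-1)`. The difference of the two sides is
`(n-k)(n-4k) + k² + 3k - 2n ≥ (n-4k)² - 2n`, and for `k ≤ αn` with `α < 1/4` we have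
`n - 4k ≥ (1-4α) n`, so it is positive as soon as `(1-4α)² n > 2`. -/

theorem Nat.choose_sub_one_succ_mul (m k : ℕ) :
    (m - 1).choose (k + 1) * ((k + 1) * m) = m.choose k * ((m - k) * (m - k - 1)) := by
  rcases m with _ | m
  · simp
  have hpascal : m.choose k * (m + 1) = (m + 1).choose k * (m + 1 - k) := by
    simpa using Nat.choose_mul_succ_eq m k
  have hstep : m.choose (k + 1) * (k + 1) = m.choose k * (m - k) := Nat.choose_succ_right_eq m k
  have hsub : m + 1 - k - 1 = m - k := by omega
  simp only [Nat.add_sub_cancel, hsub]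
  calc m.choose (k + 1) * ((k + 1) * (m + 1)) = m.choose k * (m + 1) * (m - k) := by
        rw [← mul_assoc, hstep]; ring
    _ = (m + 1).choose k * ((m + 1 - k) * (m - k)) := by rw [hpascal]; ring

theorem Nat.choose_lt_choose_sub_one_succ {m k : ℕ} (h : (k + 1) * m < (m - k) * (m - k - 1)) :
    m.choose k < (m - 1).choose (k + 1) := by
  have hkm : k ≤ m := by
    by_contra! hkm
    simp [Nat.sub_eq_zero_of_le hkm.le] at h
  have hpos : 0 < m.choose k := Nat.choose_pos hkm
  refine Nat.lt_of_mul_lt_mul_right (a := (k + 1) * m) ?_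
  rw [Nat.choose_sub_one_succ_mul]
  exact Nat.mul_lt_mul_of_pos_left h hpos

theorem Nat.choose_sub_lt_choose_sub_succ {n k : ℕ} (h4k : 4 * k ≤ n)
    (hgap : 2 * n < (n - 4 * k) ^ 2) :
    (n - k).choose k < (n - (k + 1)).choose (k + 1) := by
  obtain ⟨d, rfl⟩ := Nat.exists_eq_add_of_le h4k
  rcases d with _ | e
  · simp at hgap
  have hsub : 4 * k + (e + 1) - (k + 1) = 4 * k + (e + 1) - k - 1 := by omega
  rw [hsub]
  apply Nat.choose_lt_choose_sub_one_succ
  have e1 : 4 * k + (e + 1) - k = 3 * k + e + 1 := by omega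
  have e2 : 3 * k + e + 1 - k = 2 * k + e + 1 := by omega
  rw [e1, e2, Nat.add_sub_cancel]
  simp only [Nat.add_sub_cancel_left] at hgap
  nlinarith

theorem two_mul_lt_sub_four_mul_sq {α : ℝ} (hα : α < 1 / 4) {n k : ℕ}
    (hn : 2 / (1 - 4 * α) ^ 2 < n) (hk : (k : ℝ) ≤ α * n) :
    4 * k ≤ n ∧ 2 * n < (n - 4 * k) ^ 2 := by
  have hε : 0 < 1 - 4 * α := by linarith
  have hnpos : (0 : ℝ) < n := (div_pos two_pos (pow_pos hε 2)).trans hn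
  have hgap : (1 - 4 * α) * n ≤ n - 4 * k := by linarith
  have h4k : 4 * k ≤ n := by exact_mod_cast (by nlinarith : (4 * k : ℝ) ≤ n)
  refine ⟨h4k, ?_⟩
  have hsq : 2 < (1 - 4 * α) ^ 2 * n := (div_lt_iff₀' (pow_pos hε 2)).1 hn
  rw [← Nat.cast_lt (α := ℝ)]
  push_cast [Nat.cast_sub h4k]
  calc (2 * n : ℝ) < (1 - 4 * α) ^ 2 * n * n := by nlinarith
    _ = ((1 - 4 * α) * n) ^ 2 := by ring
    _ ≤ ((n : ℝ) - 4 * k) ^ 2 := by gcongr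

theorem sqrt_two_sub_one_div_two_lt_quarter : (Real.sqrt 2 - 1) / 2 < 1 / 4 := by
  have : Real.sqrt 2 < 3 / 2 := by
    rw [Real.sqrt_lt' (by norm_num)]; norm_num
  linarith

/-- For every real `α` with `0 < α < (√2 - 1)/2` there exists `N ∈ ℕ` such that for all
`n ≥ N` and every natural number `k ≤ ⌊α·n⌋`, one has `C(n-k, k) < C(n-(k+1), k+1)`. -/
theorem choose_strict_mono_in_k (α : ℝ) (hα0 : 0 < α) (hα : α < (Real.sqrt 2 - 1) / 2) :
    ∃ N : ℕ, ∀ n : ℕ, N ≤ n → ∀ k : ℕ, k ≤ ⌊α * (n : ℝ)⌋₊ →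
      Nat.choose (n - k) k < Nat.choose (n - (k + 1)) (k + 1) := by
  obtain ⟨N, hN⟩ := exists_nat_gt (2 / (1 - 4 * α) ^ 2)
  refine ⟨N, fun n hn k hk => ?_⟩
  have hkα : (k : ℝ) ≤ α * n :=
    (Nat.cast_le.2 hk).trans (Nat.floor_le (by positivity))
  obtain ⟨h4k, hgap⟩ := two_mul_lt_sub_four_mul_sq
    (hα.trans sqrt_two_sub_one_div_two_lt_quarter) (hN.trans_le (by exact_mod_cast hn)) hkα
  exact Nat.choose_sub_lt_choose_sub_succ h4k hgap
end

section
/- Let ω = (1+√5)/2 and β = (log ω)/2. There exist γ ∈ (0,1) and N ∈ ℕ such that for all n ≥ N, the cardinality of I(γ,n) satisfies #I(γ,n) ≤ e^{βn}. -/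
/-!
Apart from the choice of whether the next symbol is a `2`, the transitions are deterministic:
after a `2` comes a `3`, and after a `1` or a `3` the only symbol other than `2` is a `1`. So an
admissible word is determined by its first symbol and the set of positions of its `2`s. For a
word in `I(19/20, n)` that set has at most `n/20` elements, and the number of such subsets of
`{0, …, n-1}` is at most `10^(n/20) (11/10)^n` (compare with `∑_S (1/10)^#S = (11/10)^n`).
Hence `#I(19/20, n) ≤ 3 · 10^(n/20) (11/10)^n`, which is at most `ω^(n/2)` once `n ≥ 100`,
because `3 · 10^5 · (11/10)^100 ≤ (8/5)^50 ≤ ω^50`.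
-/

open scoped Classical

/-- The allowed transitions of the subshift: `1 → 1,2`, `2 → 3`, `3 → 1,2`. -/
def allowedTrans (x y : ℕ) : Prop :=
  (x = 1 ∧ (y = 1 ∨ y = 2)) ∨ (x = 2 ∧ y = 3) ∨ (x = 3 ∧ (y = 1 ∨ y = 2))

/-- The symbol (in `{1,2,3}`) at position `i` of a word encoded as `a : Fin n → Fin 3`. -/
def symb {n : ℕ} (a : Fin n → Fin 3) (i : Fin n) : ℕ := (a i : ℕ) + 1

/-- A word `(a_0, …, a_{n-1}) ∈ {1,2,3}^n` is admissible if consecutive symbols obey the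
allowed transitions. -/
def AdmissibleWord {n : ℕ} (a : Fin n → Fin 3) : Prop :=
  ∀ i : ℕ, (h : i + 1 < n) →
    allowedTrans (symb a ⟨i, Nat.lt_of_succ_lt h⟩) (symb a ⟨i + 1, h⟩)

/-- `I(γ,n)`: the set of admissible words of length `n` such that
`#{0 ≤ j ≤ n-1 : a_j ∈ {1,3}} > γ·n`. -/
noncomputable def Iset (γ : ℝ) (n : ℕ) : Finset (Fin n → Fin 3) :=
  Finset.univ.filter (fun a => AdmissibleWord a ∧
    γ * (n : ℝ) < ((Finset.univ.filter (fun i => symb a i = 1 ∨ symb a i = 3)).card : ℝ))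

open Finset

theorem allowedTrans.eq_of_ne_two {x y y' : ℕ} (h : allowedTrans x y) (h' : allowedTrans x y')
    (hy : y ≠ 2) (hy' : y' ≠ 2) : y = y' := by
  unfold allowedTrans at h h'
  omega

theorem eq_of_symb_eq {n : ℕ} {a b : Fin n → Fin 3} {i : Fin n} (h : symb a i = symb b i) :
    a i = b i :=
  Fin.ext (Nat.add_right_cancel h)

section Words

variable {n : ℕ}

def positionsOfTwo (a : Fin n → Fin 3) : Finset (Fin n) :=
  univ.filter fun i => symb a i = 2

theorem AdmissibleWord.eq_of_positionsOfTwo_eq {a b : Fin n → Fin 3} (ha : AdmissibleWord a)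
    (hb : AdmissibleWord b) (hn : 0 < n) (h₀ : a ⟨0, hn⟩ = b ⟨0, hn⟩)
    (h₂ : positionsOfTwo a = positionsOfTwo b) : a = b := by
  suffices ∀ i (hi : i < n), a ⟨i, hi⟩ = b ⟨i, hi⟩ from funext fun i => this i.1 i.2
  intro i
  induction i with
  | zero => exact fun _ => h₀
  | succ i ih =>
    intro hi
    have htwo : symb a ⟨i + 1, hi⟩ = 2 ↔ symb b ⟨i + 1, hi⟩ = 2 := by
      simpa [positionsOfTwo] using Finset.ext_iff.mp h₂ ⟨i + 1, hi⟩
    by_cases hc : symb a ⟨i + 1, hi⟩ = 2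
    · exact eq_of_symb_eq (hc.trans (htwo.mp hc).symm)
    · have hprev : symb a ⟨i, Nat.lt_of_succ_lt hi⟩ = symb b ⟨i, Nat.lt_of_succ_lt hi⟩ := by
        rw [symb, symb, ih]
      have hta := ha i hi
      rw [hprev] at hta
      exact eq_of_symb_eq (hta.eq_of_ne_two (hb i hi) hc (mt htwo.mpr hc))

theorem card_positionsOfTwo_add (a : Fin n → Fin 3) :
    (positionsOfTwo a).card + (univ.filter fun i => symb a i = 1 ∨ symb a i = 3).card = n := by
  have hcompl : (univ.filter fun i => symb a i = 1 ∨ symb a i = 3)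
      = univ.filter fun i => ¬ symb a i = 2 := by
    refine filter_congr fun i _ => ?_
    have := (a i).isLt
    simp only [symb]
    omega
  rw [hcompl, positionsOfTwo, card_filter_add_card_filter_not, card_univ, Fintype.card_fin]

theorem card_positionsOfTwo_le_of_mem_Iset {γ : ℝ} {a : Fin n → Fin 3} (ha : a ∈ Iset γ n) :
    ((positionsOfTwo a).card : ℝ) ≤ (1 - γ) * n := by
  have hcount := (mem_filter.mp ha).2.2
  have hsum : ((positionsOfTwo a).card : ℝ)
      + (univ.filter fun i => symb a i = 1 ∨ symb a i = 3).card = n := by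
    exact_mod_cast card_positionsOfTwo_add a
  linarith

theorem card_Iset_le (γ : ℝ) (hn : 0 < n) :
    (Iset γ n).card
      ≤ 3 * (univ.filter fun S : Finset (Fin n) => (S.card : ℝ) ≤ (1 - γ) * n).card := by
  calc (Iset γ n).card
      ≤ (univ ×ˢ univ.filter fun S : Finset (Fin n) => (S.card : ℝ) ≤ (1 - γ) * n).card := by
        refine card_le_card_of_injOn (fun a => (a ⟨0, hn⟩, positionsOfTwo a)) ?_ ?_
        · intro a ha
          simpa using card_positionsOfTwo_le_of_mem_Iset ha
        · intro a ha b hb hab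
          exact (mem_filter.mp (mem_coe.mp ha)).2.1.eq_of_positionsOfTwo_eq
            (mem_filter.mp (mem_coe.mp hb)).2.1 hn (congrArg Prod.fst hab) (congrArg Prod.snd hab)
    _ = _ := by rw [card_product, card_univ, Fintype.card_fin]

end Words

theorem card_filter_card_le_mul_rpow_le (ι : Type*) [Fintype ι] {x : ℝ} (hx₀ : 0 < x)
    (hx₁ : x ≤ 1) (t : ℝ) :
    ((univ.filter fun S : Finset ι => (S.card : ℝ) ≤ t).card : ℝ) * x ^ t
      ≤ (x + 1) ^ Fintype.card ι := by
  rw [← Fintype.sum_pow_mul_eq_add_pow, ← nsmul_eq_mul, ← sum_const]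
  calc ∑ _ ∈ univ.filter fun S : Finset ι => (S.card : ℝ) ≤ t, x ^ t
      ≤ ∑ S ∈ univ.filter fun S : Finset ι => (S.card : ℝ) ≤ t,
          x ^ S.card * 1 ^ (Fintype.card ι - S.card) := by
        refine sum_le_sum fun S hS => ?_
        rw [one_pow, mul_one, ← Real.rpow_natCast]
        exact Real.rpow_le_rpow_of_exponent_ge hx₀ hx₁ (mem_filter.mp hS).2
    _ ≤ ∑ S : Finset ι, x ^ S.card * 1 ^ (Fintype.card ι - S.card) :=
        sum_le_sum_of_subset_of_nonneg (filter_subset _ _) fun _ _ _ => by positivity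

theorem three_mul_pow_le_rpow_mul_exp {n : ℕ} (hn : 100 ≤ n) :
    3 * (11 / 10 : ℝ) ^ n
      ≤ (1 / 10 : ℝ) ^ ((1 - 19 / 20) * (n : ℝ))
        * Real.exp (Real.log ((1 + Real.sqrt 5) / 2) / 2 * n) := by
  have hnum : Real.log 3 + 5 * Real.log 10 + 100 * Real.log (11 / 10) ≤ 50 * Real.log (8 / 5) := by
    have h : Real.log (3 * 10 ^ 5 * (11 / 10) ^ 100) ≤ Real.log ((8 / 5 : ℝ) ^ 50) :=
      Real.log_le_log (by positivity) (by norm_num)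
    rwa [Real.log_mul (by positivity) (by positivity), Real.log_mul (by positivity) (by positivity),
      Real.log_pow, Real.log_pow, Real.log_pow, Nat.cast_ofNat, Nat.cast_ofNat,
      Nat.cast_ofNat] at h
  have hω : Real.log (8 / 5) ≤ Real.log ((1 + Real.sqrt 5) / 2) := by
    refine Real.log_le_log (by norm_num) ?_
    nlinarith [Real.sq_sqrt (show (0 : ℝ) ≤ 5 by norm_num), Real.sqrt_nonneg 5]
  have hn' : (100 : ℝ) ≤ n := by exact_mod_cast hn
  have hlog3 : 0 ≤ Real.log 3 := Real.log_nonneg (by norm_num)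
  rw [← Real.exp_log (show (0 : ℝ) < 3 by norm_num),
    ← Real.exp_log (show (0 : ℝ) < 11 / 10 by norm_num), ← Real.exp_nat_mul,
    Real.rpow_def_of_pos (by norm_num), ← Real.exp_add, ← Real.exp_add, Real.exp_le_exp,
    one_div, Real.log_inv]
  linarith [mul_le_mul_of_nonneg_left hnum (show (0 : ℝ) ≤ n / 100 by positivity),
    mul_le_mul_of_nonneg_left hω (show (0 : ℝ) ≤ n / 2 by positivity),
    mul_le_mul_of_nonneg_left hlog3 (show (0 : ℝ) ≤ n / 100 - 1 by linarith)]

/-- Let `ω = (1+√5)/2` and `β = (log ω)/2`. There exist `γ ∈ (0,1)` and `N ∈ ℕ` such that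
for all `n ≥ N`, `#I(γ,n) ≤ e^{βn}`. -/
theorem card_Iset_le_exp :
    ∃ γ : ℝ, 0 < γ ∧ γ < 1 ∧ ∃ N : ℕ, ∀ n : ℕ, N ≤ n →
      ((Iset γ n).card : ℝ) ≤
        Real.exp ((Real.log ((1 + Real.sqrt 5) / 2) / 2) * n) := by
  refine ⟨19 / 20, by norm_num, by norm_num, 100, fun n hn => ?_⟩
  set small := univ.filter fun S : Finset (Fin n) => (S.card : ℝ) ≤ (1 - 19 / 20) * n
  have hcount : ((Iset (19 / 20) n).card : ℝ) ≤ 3 * small.card := by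
    exact_mod_cast card_Iset_le (19 / 20) (by omega : 0 < n)
  have htail : (small.card : ℝ) * (1 / 10) ^ ((1 - 19 / 20) * (n : ℝ)) ≤ (11 / 10) ^ n := by
    have := card_filter_card_le_mul_rpow_le (Fin n) (x := 1 / 10) (by norm_num) (by norm_num)
      ((1 - 19 / 20) * n)
    rwa [Fintype.card_fin, show (1 / 10 + 1 : ℝ) = 11 / 10 by norm_num] at this
  have hpos : (0 : ℝ) < (1 / 10) ^ ((1 - 19 / 20) * (n : ℝ)) := by positivity
  refine le_of_mul_le_mul_left ?_ hpos
  calc (1 / 10 : ℝ) ^ ((1 - 19 / 20) * (n : ℝ)) * (Iset (19 / 20) n).card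
      ≤ (1 / 10 : ℝ) ^ ((1 - 19 / 20) * (n : ℝ)) * (3 * small.card) := by gcongr
    _ = 3 * (small.card * (1 / 10 : ℝ) ^ ((1 - 19 / 20) * (n : ℝ))) := by ring
    _ ≤ 3 * (11 / 10) ^ n := by gcongr
    _ ≤ _ := three_mul_pow_le_rpow_mul_exp hn
end

section
/- Let 0 < σ < 1/3, γ ∈ (0,1) and c > 0 satisfy (1-γ)·log(1/σ) - γ > 4c. Set A = log(1/σ), θ = 2c/(A - 2c), and define weights w(1) = w(3) = -1 and w(2) = log(1/σ). Then for every n ≥ 1 and every word (a_0, …, a_{n-1}) ∈ {1,2,3}^n with #{j : a_j = 2} ≥ (1-γ)n, there exist an integer l ≥ θn and integers 1 ≤ n_1 < ⋯ < n_l ≤ n such that for every i = 1, …, l and every 0 ≤ k ≤ n_i - 1 one has Σ_{j=k}^{n_i - 1} w(a_j) ≥ 2c·(n_i - k). -/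
/-!
Pliss lemma. Put `S m = ∑_{j<m} (w(a_j) - 2c)` and call `m` a record time of `S` when `S k ≤ S m`
for all `k < m`. A record time `m` is a hyperbolic time: every tail sum `∑_{k ≤ j < m} w(a_j)` is at
least `2c (m - k)`. Since every increment of `S` is at most `A - 2c`, a new running maximum of `S` can
only be reached at a record time, so `S n ≤ (A - 2c) · #(record times ≤ n)`. Counting the symbols `2`
gives `S n ≥ ((1 - γ)(A + 1) - 1 - 2c) n ≥ 2c n`, hence at least `2c n / (A - 2c)` record times.
-/

open Finset

section RecordTimes

variable (S : ℕ → ℝ)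

def IsRecordTime (m : ℕ) : Prop := ∀ k < m, S k ≤ S m

open Classical in
noncomputable def recordTimes (m : ℕ) : Finset ℕ := {i ∈ Icc 1 m | IsRecordTime S i}

lemma mem_recordTimes {m i : ℕ} : i ∈ recordTimes S m ↔ (1 ≤ i ∧ i ≤ m) ∧ IsRecordTime S i := by
  simp [recordTimes]

open Classical in
lemma card_recordTimes_succ (m : ℕ) :
    #(recordTimes S (m + 1)) = #(recordTimes S m) + if IsRecordTime S (m + 1) then 1 else 0 := by
  have hIcc : Icc 1 (m + 1) = insert (m + 1) (Icc 1 m) := by grind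
  simp only [recordTimes, hIcc, filter_insert]
  split_ifs
  · rw [card_insert_of_notMem (by simp)]
  · rfl

lemma card_recordTimes_mono : Monotone fun m => #(recordTimes S m) :=
  monotone_nat_of_le_succ fun m => by rw [card_recordTimes_succ]; omega

-- Bounding the running maximum `max_{k ≤ m} S k`, not just `S m`, is what makes the induction work.
lemma le_mul_card_recordTimes {B : ℝ} (hB : 0 ≤ B) (h0 : S 0 ≤ 0)
    (hstep : ∀ m, S (m + 1) ≤ S m + B) (m : ℕ) : ∀ k ≤ m, S k ≤ B * #(recordTimes S m) := by
  induction m with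
  | zero =>
    intro k hk
    obtain rfl := Nat.le_zero.mp hk
    simpa [recordTimes] using h0
  | succ m ih =>
    have hmono : B * #(recordTimes S m) ≤ B * #(recordTimes S (m + 1)) :=
      mul_le_mul_of_nonneg_left (by exact_mod_cast card_recordTimes_mono S m.le_succ) hB
    intro k hk
    rcases hk.lt_or_eq with hkm | rfl
    · exact (ih k (Nat.lt_succ_iff.mp hkm)).trans hmono
    by_cases hrec : IsRecordTime S (m + 1)
    · rw [card_recordTimes_succ, if_pos hrec]
      push_cast
      linarith [hstep m, ih m le_rfl]
    · obtain ⟨j, hj, hlt⟩ : ∃ j < m + 1, S (m + 1) < S j := by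
        simpa [IsRecordTime] using hrec
      exact hlt.le.trans ((ih j (Nat.lt_succ_iff.mp hj)).trans hmono)

end RecordTimes

lemma mul_sub_le_sum_Ico_of_isRecordTime {f : ℕ → ℝ} {c : ℝ} {m : ℕ}
    (hm : IsRecordTime (fun i => ∑ j ∈ range i, (f j - c)) m) {k : ℕ} (hk : k < m) :
    c * (m - k) ≤ ∑ j ∈ Ico k m, f j := by
  have h := sub_nonneg.mpr (hm k hk)
  rw [← sum_Ico_eq_sub _ hk.le, sum_sub_distrib, sum_const, Nat.card_Ico, nsmul_eq_mul,
    Nat.cast_sub hk.le] at h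
  linarith

lemma sum_ite_const_neg_one {ι : Type*} (s : Finset ι) (p : ι → Prop) [DecidablePred p] (A : ℝ) :
    ∑ j ∈ s, (if p j then A else -1) = #{j ∈ s | p j} * (A + 1) - #s := by
  have h : ∀ j, (if p j then A else -1) = (A + 1) * (if p j then 1 else 0) - 1 := by
    intro j; split_ifs <;> ring
  simp only [h, sum_sub_distrib, ← mul_sum, sum_boole, sum_const, nsmul_eq_mul, mul_one]
  ring

theorem pliss_hyperbolic_times_general (σ γ c : ℝ)
    (hγ0 : 0 < γ) (hγ1 : γ < 1) (hc : 0 < c)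
    (hcond : (1 - γ) * Real.log (1 / σ) - γ > 4 * c)
    (n : ℕ) (a : ℕ → ℕ)
    (hcount : (1 - γ) * (n : ℝ) ≤ (((Finset.range n).filter (fun j => a j = 2)).card : ℝ)) :
    ∃ l : ℕ, (2 * c / (Real.log (1 / σ) - 2 * c)) * (n : ℝ) ≤ (l : ℝ) ∧
      ∃ ns : Fin l → ℕ, StrictMono ns ∧ (∀ i, 1 ≤ ns i ∧ ns i ≤ n) ∧
        ∀ i : Fin l, ∀ k : ℕ, k ≤ ns i - 1 →
          2 * c * ((ns i : ℝ) - (k : ℝ)) ≤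
            ∑ j ∈ Finset.Icc k (ns i - 1),
              (if a j = 2 then Real.log (1 / σ) else (-1 : ℝ)) := by
  set A := Real.log (1 / σ)
  set w : ℕ → ℝ := fun j => if a j = 2 then A else -1
  set S : ℕ → ℝ := fun m => ∑ j ∈ range m, (w j - 2 * c)
  have hA : 0 < A := by nlinarith
  have hA2c : 0 < A - 2 * c := by nlinarith
  have hSn : 2 * c * n ≤ S n := by
    have hsum : S n = #{j ∈ range n | a j = 2} * (A + 1) - n - 2 * c * n := by
      simp only [S, w, sum_sub_distrib, sum_ite_const_neg_one, sum_const, card_range,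
        nsmul_eq_mul]
      ring
    nlinarith [mul_le_mul_of_nonneg_right hcount (by linarith : (0 : ℝ) ≤ A + 1)]
  have hcard := le_mul_card_recordTimes S hA2c.le (by simp [S]) (fun m => by
    simp only [S, w, sum_range_succ, add_le_add_iff_left]; split_ifs <;> linarith) n n le_rfl
  set P := recordTimes S n
  refine ⟨#P, ?_, fun i => P.orderEmbOfFin rfl i, (P.orderEmbOfFin rfl).strictMono, fun i => ?_,
    fun i k hk => ?_⟩
  · rw [div_mul_eq_mul_div, div_le_iff₀ hA2c]
    linarith
  · exact ((mem_recordTimes S).mp (P.orderEmbOfFin_mem rfl i)).1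
  · obtain ⟨hbounds, hrec⟩ := (mem_recordTimes S).mp (P.orderEmbOfFin_mem rfl i)
    have hkm : k < P.orderEmbOfFin rfl i := by grind
    have hIcc : Icc k (P.orderEmbOfFin rfl i - 1) = Ico k (P.orderEmbOfFin rfl i) := by grind
    rw [hIcc]
    exact mul_sub_le_sum_Ico_of_isRecordTime hrec hkm

/-- Pliss-type abundance of hyperbolic times for words with a large proportion of symbols `2`.
The weights are `w(1) = w(3) = -1` and `w(2) = log(1/σ)`. -/
theorem pliss_hyperbolic_times (σ γ c : ℝ) (hσ0 : 0 < σ) (hσ : σ < 1 / 3)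
    (hγ0 : 0 < γ) (hγ1 : γ < 1) (hc : 0 < c)
    (hcond : (1 - γ) * Real.log (1 / σ) - γ > 4 * c)
    (n : ℕ) (hn : 1 ≤ n) (a : ℕ → ℕ)
    (ha : ∀ j < n, a j = 1 ∨ a j = 2 ∨ a j = 3)
    (hcount : (1 - γ) * (n : ℝ) ≤ (((Finset.range n).filter (fun j => a j = 2)).card : ℝ)) :
    ∃ l : ℕ, (2 * c / (Real.log (1 / σ) - 2 * c)) * (n : ℝ) ≤ (l : ℝ) ∧
      ∃ ns : Fin l → ℕ, StrictMono ns ∧ (∀ i, 1 ≤ ns i ∧ ns i ≤ n) ∧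
        ∀ i : Fin l, ∀ k : ℕ, k ≤ ns i - 1 →
          2 * c * ((ns i : ℝ) - (k : ℝ)) ≤
            ∑ j ∈ Finset.Icc k (ns i - 1),
              (if a j = 2 then Real.log (1 / σ) else (-1 : ℝ)) :=
  pliss_hyperbolic_times_general σ γ c hγ0 hγ1 hc hcond n a hcount
end

section
/- Let X be a Polish space, μ a finite Borel measure on X, G : X → X continuous, and J : X → [0, ∞) a Borel function such that μ(G(A)) = ∫_A J dμ for every Borel set A on which G is injective. Then for every n ≥ 1 and every Borel set A on which G^n is injective, μ(G^n(A)) = ∫_A Π_{j=0}^{n-1} J(G^j(x)) dμ(x). -/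
/-!
Jacobians compose like derivatives: if `ρ` is a Jacobian of `F : (X, μ) → (Y, ν)` and `σ` one of
`G : (Y, ν) → (Z, η)`, then `ρ · (σ ∘ F)` is a Jacobian of `G ∘ F`. Indeed, for `A` on which
`G ∘ F` is injective, the set `F(A)` is Borel by Lusin–Suslin, and the Jacobian identity of `F` says that `F` pushes
`ρ · μ|_A` forward to `ν|_{F(A)}`; integrating `σ` against this push-forward gives the claim.
Iterating yields the product formula for `G^n`.
-/

open MeasureTheory Set
open scoped ENNReal

def IsJacobian {X Y : Type*} [MeasurableSpace X] [MeasurableSpace Y]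
    (μ : Measure X) (ν : Measure Y) (F : X → Y) (ρ : X → ℝ≥0∞) : Prop :=
  ∀ A, MeasurableSet A → InjOn F A → ν (F '' A) = ∫⁻ x in A, ρ x ∂μ

theorem isJacobian_id {X : Type*} [MeasurableSpace X] (μ : Measure X) :
    IsJacobian μ μ id fun _ => 1 := by
  intro A _ _
  simp

namespace IsJacobian

variable {X Y Z : Type*} [MeasurableSpace X] [MeasurableSpace Y] [MeasurableSpace Z]
  {μ : Measure X} {ν : Measure Y} {η : Measure Z} {F : X → Y} {G : Y → Z}
  {ρ : X → ℝ≥0∞} {σ : Y → ℝ≥0∞}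

theorem map_withDensity_restrict (hF : IsJacobian μ ν F ρ) (hFm : Measurable F) {A : Set X}
    (hA : MeasurableSet A) (hinj : InjOn F A) :
    ((μ.restrict A).withDensity ρ).map F = ν.restrict (F '' A) := by
  ext S hS
  rw [Measure.map_apply hFm hS, withDensity_apply _ (hFm hS),
    Measure.restrict_restrict (hFm hS), Measure.restrict_apply hS, ← image_preimage_inter,
    hF _ ((hFm hS).inter hA) (hinj.mono inter_subset_right)]

theorem comp [TopologicalSpace X] [PolishSpace X] [BorelSpace X] [TopologicalSpace Y]
    [T2Space Y] [BorelSpace Y] (hG : IsJacobian ν η G σ) (hF : IsJacobian μ ν F ρ)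
    (hFc : Continuous F) (hρ : Measurable ρ) (hσ : Measurable σ) :
    IsJacobian μ η (G ∘ F) fun x => ρ x * σ (F x) := by
  intro A hA hinj
  have hFA : MeasurableSet (F '' A) :=
    hA.image_of_continuousOn_injOn hFc.continuousOn hinj.of_comp
  calc η ((G ∘ F) '' A) = ∫⁻ y in F '' A, σ y ∂ν := by
        rw [image_comp, hG _ hFA hinj.image_of_comp]
    _ = ∫⁻ y, σ y ∂((μ.restrict A).withDensity ρ).map F := by
        rw [hF.map_withDensity_restrict hFc.measurable hA hinj.of_comp]
    _ = ∫⁻ x in A, ρ x * σ (F x) ∂μ := by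
        rw [lintegral_map hσ hFc.measurable,
          lintegral_withDensity_eq_lintegral_mul _ hρ (g := fun x => σ (F x))
            (hσ.comp hFc.measurable)]
        rfl

theorem iterate [TopologicalSpace X] [PolishSpace X] [BorelSpace X] {G : X → X}
    {ρ : X → ℝ≥0∞} (hG : IsJacobian μ μ G ρ) (hGc : Continuous G) (hρ : Measurable ρ)
    (n : ℕ) : IsJacobian μ μ G^[n] fun x => ∏ j ∈ Finset.range n, ρ (G^[j] x) := by
  induction n with
  | zero => simpa using isJacobian_id μ
  | succ n ih =>
    have hprod : Measurable fun x => ∏ j ∈ Finset.range n, ρ (G^[j] x) :=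
      Finset.measurable_prod _ fun j _ => hρ.comp (hGc.iterate j).measurable
    rw [Function.iterate_succ']
    simpa only [Finset.prod_range_succ] using hG.comp ih (hGc.iterate n) hprod hρ

end IsJacobian

theorem jacobian_iterate_general {X : Type*} [TopologicalSpace X] [PolishSpace X]
    [MeasurableSpace X] [BorelSpace X]
    (μ : Measure X) (G : X → X) (hG : Continuous G)
    (J : X → ℝ) (hJm : Measurable J) (hJ0 : ∀ x, 0 ≤ J x)
    (hJac : ∀ A : Set X, MeasurableSet A → Set.InjOn G A →
      μ (G '' A) = ∫⁻ x in A, ENNReal.ofReal (J x) ∂μ) :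
    ∀ n : ℕ, 1 ≤ n → ∀ A : Set X, MeasurableSet A → Set.InjOn (G^[n]) A →
      μ (G^[n] '' A) =
        ∫⁻ x in A, ENNReal.ofReal (∏ j ∈ Finset.range n, J (G^[j] x)) ∂μ := by
  intro n _ A hA hinj
  have hJac' : IsJacobian μ μ G fun x => ENNReal.ofReal (J x) := hJac
  simpa only [ENNReal.ofReal_prod_of_nonneg fun j _ => hJ0 _]
    using hJac'.iterate hG hJm.ennreal_ofReal n A hA hinj

/-- If `J` is a Jacobian of the finite Borel measure `μ` with respect to the continuous map
`G` on a Polish space, then `Π_{j<n} J ∘ G^j` is a Jacobian of `μ` with respect to `G^n`. -/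
theorem jacobian_iterate {X : Type*} [TopologicalSpace X] [PolishSpace X]
    [MeasurableSpace X] [BorelSpace X]
    (μ : Measure X) [IsFiniteMeasure μ] (G : X → X) (hG : Continuous G)
    (J : X → ℝ) (hJm : Measurable J) (hJ0 : ∀ x, 0 ≤ J x)
    (hJac : ∀ A : Set X, MeasurableSet A → Set.InjOn G A →
      μ (G '' A) = ∫⁻ x in A, ENNReal.ofReal (J x) ∂μ) :
    ∀ n : ℕ, 1 ≤ n → ∀ A : Set X, MeasurableSet A → Set.InjOn (G^[n]) A →
      μ (G^[n] '' A) =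
        ∫⁻ x in A, ENNReal.ofReal (∏ j ∈ Finset.range n, J (G^[j] x)) ∂μ :=
  jacobian_iterate_general μ G hG J hJm hJ0 hJac
end

section
/- Let X be a compact metric space, G : X → X a continuous map such that G^{-1}({x}) is finite for every x ∈ X, φ : X → ℝ continuous, ν a Borel probability measure on X, and λ > 0. Suppose that for every bounded Borel function ψ : X → ℝ one has ∫_X ( Σ_{y ∈ G^{-1}({x})} e^{φ(y)} ψ(y) ) dν(x) = λ ∫_X ψ dν. Then for every Borel set A on which G is injective, ν(G(A)) = ∫_A λ·e^{-φ} dν; that is, λ·e^{-φ} is a Jacobian of ν with respect to G, and ν is a conformal measure. -/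
open MeasureTheory

/- On a set `A` where `G` is injective, every fibre of `G` meets `A` in at most one point, so
testing the eigenmeasure identity `L_φ* ν = λ ν` against `ψ = 1_A · e^{-φ}` turns the transfer
sum into the indicator of `G(A)`; this gives `ν(G(A)) = λ ∫_A e^{-φ} dν`. -/

theorem Finset.sum_indicator_comp_eq_indicator_image {α β M : Type*} [AddCommMonoid M]
    {G : α → β} {A : Set α} (hinj : Set.InjOn G A) (f : β → M) {x : β} {s : Finset α}
    (hs : ↑s = G ⁻¹' {x}) :
    ∑ y ∈ s, A.indicator (f ∘ G) y = (G '' A).indicator f x := by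
  have hmem : ∀ {y}, y ∈ s ↔ G y = x := by
    intro y
    rw [← Finset.mem_coe, hs, Set.mem_preimage, Set.mem_singleton_iff]
  by_cases hx : x ∈ G '' A
  · obtain ⟨a, haA, rfl⟩ := hx
    rw [Finset.sum_eq_single_of_mem a (hmem.2 rfl), Set.indicator_of_mem haA,
      Set.indicator_of_mem (Set.mem_image_of_mem G haA), Function.comp_apply]
    intro y hy hya
    exact Set.indicator_of_notMem (fun hyA => hya (hinj hyA haA (hmem.1 hy))) _
  · rw [Set.indicator_of_notMem hx]
    refine Finset.sum_eq_zero fun y hy => Set.indicator_of_notMem ?_ _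
    exact fun hyA => hx ⟨y, hyA, hmem.1 hy⟩

theorem sum_exp_mul_indicator_exp_neg_eq_indicator_image {α β : Type*} {G : α → β}
    {A : Set α} (hinj : Set.InjOn G A) (φ : α → ℝ) {x : β} {s : Finset α}
    (hs : ↑s = G ⁻¹' {x}) :
    ∑ y ∈ s, Real.exp (φ y) * A.indicator (fun y => Real.exp (-φ y)) y
      = (G '' A).indicator 1 x := by
  have hterm : ∀ y, Real.exp (φ y) * A.indicator (fun y => Real.exp (-φ y)) y
      = A.indicator ((1 : β → ℝ) ∘ G) y := by
    intro y
    rw [← Set.indicator_mul_right A fun y => Real.exp (φ y)]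
    simp only [← Real.exp_add, add_neg_cancel, Real.exp_zero]
    rfl
  simp only [hterm]
  exact Finset.sum_indicator_comp_eq_indicator_image hinj 1 hs

theorem exists_abs_indicator_le_of_continuous {X : Type*} [TopologicalSpace X] [CompactSpace X]
    {f : X → ℝ} (hf : Continuous f) (A : Set X) : ∃ M : ℝ, ∀ x, |A.indicator f x| ≤ M := by
  obtain ⟨M, hM⟩ := isCompact_univ.exists_bound_of_continuousOn hf.continuousOn
  exact ⟨M, fun x => (norm_indicator_le_norm_self f x).trans (hM x trivial)⟩

theorem measureReal_image_eq_of_dual_eigenmeasure {X : Type*} [TopologicalSpace X]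
    [CompactSpace X] [MeasurableSpace X] [OpensMeasurableSpace X]
    {G : X → X} (hfin : ∀ x : X, (G ⁻¹' {x}).Finite) {φ : X → ℝ} (hφ : Continuous φ)
    {ν : Measure X} {lam : ℝ}
    (hdual : ∀ ψ : X → ℝ, Measurable ψ → (∃ M : ℝ, ∀ x, |ψ x| ≤ M) →
      ∫ x, (∑ y ∈ (hfin x).toFinset, Real.exp (φ y) * ψ y) ∂ν = lam * ∫ x, ψ x ∂ν)
    {A : Set X} (hA : MeasurableSet A) (hinj : Set.InjOn G A) (hGA : MeasurableSet (G '' A)) :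
    ν.real (G '' A) = lam * ∫ x in A, Real.exp (-φ x) ∂ν := by
  have hexp : Continuous fun x => Real.exp (-φ x) := by fun_prop
  have key := hdual _ (hexp.measurable.indicator hA) (exists_abs_indicator_le_of_continuous hexp A)
  simp only [sum_exp_mul_indicator_exp_neg_eq_indicator_image hinj φ
    (Set.Finite.coe_toFinset (hfin _))] at key
  rwa [integral_indicator_one hGA, integral_indicator hA] at key

/-- If `ν` is an eigenmeasure of the dual transfer operator, `L_φ* ν = λ ν`, then
`λ·e^{-φ}` is a Jacobian of `ν` with respect to `G`: `ν` is a conformal measure. -/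
theorem conformal_measure_jacobian {X : Type*} [MetricSpace X] [CompactSpace X]
    [MeasurableSpace X] [BorelSpace X]
    (G : X → X) (hG : Continuous G) (hfin : ∀ x : X, (G ⁻¹' {x}).Finite)
    (φ : X → ℝ) (hφ : Continuous φ)
    (ν : Measure X) [IsProbabilityMeasure ν] (lam : ℝ) (hlam : 0 < lam)
    (hdual : ∀ ψ : X → ℝ, Measurable ψ → (∃ M : ℝ, ∀ x, |ψ x| ≤ M) →
      ∫ x, (∑ y ∈ (hfin x).toFinset, Real.exp (φ y) * ψ y) ∂ν = lam * ∫ x, ψ x ∂ν) :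
    ∀ A : Set X, MeasurableSet A → Set.InjOn G A →
      ν (G '' A) = ∫⁻ x in A, ENNReal.ofReal (lam * Real.exp (-φ x)) ∂ν := by
  intro A hA hinj
  have hGA : MeasurableSet (G '' A) := hA.image_of_continuousOn_injOn hG.continuousOn hinj
  have hint : Integrable (fun x => lam * Real.exp (-φ x)) ν :=
    (by fun_prop : Continuous fun x => lam * Real.exp (-φ x)).integrable_of_hasCompactSupport
      (HasCompactSupport.of_compactSpace _)
  rw [← ofReal_integral_eq_lintegral_ofReal hint.restrict (ae_of_all _ fun x => by positivity),
    integral_const_mul, ← measureReal_image_eq_of_dual_eigenmeasure hfin hφ hdual hA hinj hGA,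
    ofReal_measureReal]
end

section
/- Let E be a real Banach space, L : E → E a bounded linear operator, λ > 0, and (T_k)_{k ≥ 0} a sequence in E such that sup_k ‖λ^{-k} T_k‖ < ∞ and ‖λ^{-k}(L T_k - T_{k+1})‖ → 0 as k → ∞. For n ≥ 1 set h_n = (1/n)·Σ_{i=0}^{n-1} λ^{-i} T_i. Then every accumulation point h of the sequence (h_n) (i.e. any limit of a subsequence h_{n_k} with n_k → ∞) satisfies L h = λ h. -/
/-!
Put `y k = λ^{-k} T_k`, so that `λ^{-k}(L T_k - T_{k+1}) = L y_k - λ y_{k+1}` and `h_n` is the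
Cesàro mean of `(y_k)`. Summing `L y_i - λ y_i = (L y_i - λ y_{i+1}) + λ (y_{i+1} - y_i)` over
`i < n` telescopes, so `L h_n - λ h_n` is the Cesàro mean of a null sequence plus
`λ (y_n - y_0) / n`, which is `O(1/n)` because `(y_k)` is bounded. Hence `L h_n - λ h_n → 0`,
and by continuity of `L` every accumulation point `h` satisfies `L h - λ h = 0`.
-/

open Filter Finset Topology

section Telescoping

variable {R M : Type*} [Semiring R] [AddCommGroup M] [Module R M]

theorem map_sum_sub_smul_sum_eq (L : M →ₗ[R] M) (c : R) (y : ℕ → M) (n : ℕ) :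
    L (∑ i ∈ range n, y i) - c • ∑ i ∈ range n, y i
      = ∑ i ∈ range n, (L (y i) - c • y (i + 1)) + c • (y n - y 0) := by
  rw [smul_sub, ← sum_range_sub (fun i => c • y i), map_sum, smul_sum, ← sum_sub_distrib,
    ← sum_add_distrib]
  exact sum_congr rfl fun i _ => by abel

end Telescoping

section Cesaro

variable {E : Type*} [NormedAddCommGroup E] [NormedSpace ℝ E]

theorem tendsto_inv_natCast_smul_of_norm_le {y : ℕ → E} {M : ℝ} (hy : ∀ k, ‖y k‖ ≤ M) :
    Tendsto (fun n : ℕ => (n : ℝ)⁻¹ • y n) atTop (𝓝 0) :=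
  tendsto_inv_atTop_nhds_zero_nat.zero_smul_isBoundedUnder_le (isBoundedUnder_of ⟨M, hy⟩)

theorem tendsto_cesaro_map_sub_smul {L : E →L[ℝ] E} {c : ℝ} {y : ℕ → E} {M : ℝ}
    (hy : ∀ k, ‖y k‖ ≤ M) (hdefect : Tendsto (fun k => L (y k) - c • y (k + 1)) atTop (𝓝 0)) :
    Tendsto (fun n : ℕ => L ((n : ℝ)⁻¹ • ∑ i ∈ range n, y i)
      - c • (n : ℝ)⁻¹ • ∑ i ∈ range n, y i) atTop (𝓝 0) := by
  have hbdd : ∀ k, ‖c • (y k - y 0)‖ ≤ ‖c‖ * (M + M) := fun k => by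
    rw [norm_smul]
    gcongr
    exact (norm_sub_le _ _).trans (add_le_add (hy k) (hy 0))
  have hsum := hdefect.cesaro_smul.add (tendsto_inv_natCast_smul_of_norm_le hbdd)
  rw [add_zero] at hsum
  refine hsum.congr fun n => ?_
  rw [map_smul, smul_comm c, ← smul_sub, ← smul_add]
  exact congrArg _ (map_sum_sub_smul_sum_eq L.toLinearMap c y n).symm

end Cesaro

theorem eq_smul_of_tendsto_map_sub_smul {ι E : Type*} [NormedAddCommGroup E] [NormedSpace ℝ E]
    {l : Filter ι} [l.NeBot] {L : E →L[ℝ] E} {c : ℝ} {a : ι → E} {h : E}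
    (ha : Tendsto a l (𝓝 h)) (happrox : Tendsto (fun i => L (a i) - c • a i) l (𝓝 0)) :
    L h = c • h :=
  sub_eq_zero.mp <| tendsto_nhds_unique (((L.continuous.tendsto h).comp ha).sub (ha.const_smul c))
    happrox

theorem accumulation_point_is_eigenvector_general {E : Type*} [NormedAddCommGroup E]
    [NormedSpace ℝ E]
    (L : E →L[ℝ] E) (lam : ℝ) (hlam : 0 < lam) (T : ℕ → E)
    (hbdd : ∃ M : ℝ, ∀ k : ℕ, ‖(lam ^ k)⁻¹ • T k‖ ≤ M)
    (hto : Filter.Tendsto (fun k : ℕ => ‖(lam ^ k)⁻¹ • (L (T k) - T (k + 1))‖)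
      Filter.atTop (nhds 0))
    (h : E) (nk : ℕ → ℕ) (hmono : StrictMono nk)
    (hconv : Filter.Tendsto
      (fun j : ℕ => ((nk j : ℝ))⁻¹ • ∑ i ∈ Finset.range (nk j), (lam ^ i)⁻¹ • T i)
      Filter.atTop (nhds h)) :
    L h = lam • h := by
  obtain ⟨M, hM⟩ := hbdd
  have hdefect : ∀ k : ℕ, (lam ^ k)⁻¹ • (L (T k) - T (k + 1))
      = L ((lam ^ k)⁻¹ • T k) - lam • (lam ^ (k + 1))⁻¹ • T (k + 1) := fun k => by
    rw [smul_sub, map_smul, smul_smul, pow_succ, mul_inv, mul_left_comm, mul_inv_cancel₀ hlam.ne',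
      mul_one]
  simp only [hdefect] at hto
  have happrox := tendsto_cesaro_map_sub_smul hM (tendsto_zero_iff_norm_tendsto_zero.mpr hto)
  exact eq_smul_of_tendsto_map_sub_smul hconv (happrox.comp hmono.tendsto_atTop)

/-- Let `L` be a bounded operator on a Banach space, `λ > 0`, and `(T_k)` a sequence with
`sup_k ‖λ^{-k} T_k‖ < ∞` and `‖λ^{-k}(L T_k - T_{k+1})‖ → 0`. Then every accumulation
point `h` of `h_n = (1/n)·Σ_{i=0}^{n-1} λ^{-i} T_i` satisfies `L h = λ h`. -/
theorem accumulation_point_is_eigenvector {E : Type*} [NormedAddCommGroup E]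
    [NormedSpace ℝ E] [CompleteSpace E]
    (L : E →L[ℝ] E) (lam : ℝ) (hlam : 0 < lam) (T : ℕ → E)
    (hbdd : ∃ M : ℝ, ∀ k : ℕ, ‖(lam ^ k)⁻¹ • T k‖ ≤ M)
    (hto : Filter.Tendsto (fun k : ℕ => ‖(lam ^ k)⁻¹ • (L (T k) - T (k + 1))‖)
      Filter.atTop (nhds 0))
    (h : E) (nk : ℕ → ℕ) (hmono : StrictMono nk)
    (hconv : Filter.Tendsto
      (fun j : ℕ => ((nk j : ℝ))⁻¹ • ∑ i ∈ Finset.range (nk j), (lam ^ i)⁻¹ • T i)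
      Filter.atTop (nhds h)) :
    L h = lam • h :=
  accumulation_point_is_eigenvector_general L lam hlam T hbdd hto h nk hmono hconv
end

section
/- Let X be a compact metric space, G : X → X a continuous surjection such that G^{-1}({x}) is finite for every x ∈ X, φ : X → ℝ continuous, λ > 0. Suppose ν is a Borel probability measure on X with ∫_X L_φψ dν = λ·∫_X ψ dν for every continuous ψ : X → ℝ, and h : X → [0, ∞) is continuous with L_φh = λ·h pointwise. Then the measure μ defined by μ(A) = ∫_A h dν for Borel sets A is invariant under G: ∫_X (ψ ∘ G) dμ = ∫_X ψ dμ for every continuous ψ, i.e. the pushforward of μ by G equals μ. -/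
/-!
Write `L` for the transfer operator. Since `G y = x` on the fibre over `x`, it satisfies
`L((ψ ∘ G) · h) = ψ · L h = λ ψ h`. Integrating against `ν`, which `L` scales by `λ`, gives
`λ ∫ (ψ ∘ G) h dν = λ ∫ ψ h dν`, i.e. `∫ ψ ∘ G dμ = ∫ ψ dμ` for `μ = h ν`. A finite Borel measure
on a metric space is determined by its integrals of bounded continuous functions, so `G_* μ = μ`.
-/

open MeasureTheory BoundedContinuousFunction

noncomputable def transferOp {X Y : Type*} {G : X → Y} (hfin : ∀ x : Y, (G ⁻¹' {x}).Finite)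
    (φ ψ : X → ℝ) (x : Y) : ℝ :=
  ∑ y ∈ (hfin x).toFinset, Real.exp (φ y) * ψ y

theorem transferOp_mul_comp {X Y : Type*} {G : X → Y} (hfin : ∀ x : Y, (G ⁻¹' {x}).Finite)
    (φ : X → ℝ) (ψ : Y → ℝ) (h : X → ℝ) (x : Y) :
    transferOp hfin φ (fun y => ψ (G y) * h y) x = ψ x * transferOp hfin φ h x := by
  rw [transferOp, transferOp, Finset.mul_sum]
  refine Finset.sum_congr rfl fun y hy => ?_
  rw [(hfin x).mem_toFinset.mp hy]
  ring

theorem integral_withDensity_ofReal {X : Type*} [MeasurableSpace X] {ν : Measure X} {h : X → ℝ}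
    (hm : Measurable h) (h0 : ∀ x, 0 ≤ h x) (g : X → ℝ) :
    ∫ x, g x ∂ν.withDensity (fun x => ENNReal.ofReal (h x)) = ∫ x, h x * g x ∂ν := by
  rw [integral_withDensity_eq_integral_toReal_smul hm.ennreal_ofReal
    (ae_of_all _ fun _ => ENNReal.ofReal_lt_top)]
  simp_rw [ENNReal.toReal_ofReal (h0 _), smul_eq_mul]

theorem MeasureTheory.Measure.map_eq_self_of_forall_integral_comp_eq {X : Type*}
    [MeasurableSpace X] [TopologicalSpace X] [HasOuterApproxClosed X] [BorelSpace X] {μ : Measure X}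
    [IsFiniteMeasure μ] {G : X → X} (hG : Continuous G)
    (hμ : ∀ ψ : X →ᵇ ℝ, ∫ x, ψ (G x) ∂μ = ∫ x, ψ x ∂μ) : μ.map G = μ :=
  have := Measure.isFiniteMeasure_map μ G
  ext_of_forall_integral_eq_of_IsFiniteMeasure fun ψ => by
    rw [integral_map hG.aemeasurable ψ.continuous.aestronglyMeasurable, hμ]

theorem integral_comp_mul_eq_of_eigen {X : Type*} [TopologicalSpace X] [MeasurableSpace X]
    {G : X → X} (hG : Continuous G) (hfin : ∀ x, (G ⁻¹' {x}).Finite)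
    {φ : X → ℝ} {lam : ℝ} (hlam : lam ≠ 0) {ν : Measure X}
    (hν : ∀ ψ : C(X, ℝ), ∫ x, transferOp hfin φ ψ x ∂ν = lam * ∫ x, ψ x ∂ν)
    {h : X → ℝ} (hh : Continuous h) (heig : ∀ x, transferOp hfin φ h x = lam * h x)
    (ψ : C(X, ℝ)) : ∫ x, ψ (G x) * h x ∂ν = ∫ x, ψ x * h x ∂ν := by
  have hψ := hν ⟨fun x => ψ (G x) * h x, by fun_prop⟩
  simp only [ContinuousMap.coe_mk, transferOp_mul_comp, heig, mul_left_comm _ lam,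
    integral_const_mul] at hψ
  exact (mul_left_cancel₀ hlam hψ).symm

theorem eigen_density_measure_invariant_general {X : Type*} [MetricSpace X] [CompactSpace X]
    [MeasurableSpace X] [BorelSpace X]
    (G : X → X) (hG : Continuous G)
    (hfin : ∀ x : X, (G ⁻¹' {x}).Finite)
    (φ : X → ℝ) (lam : ℝ) (hlam : 0 < lam)
    (ν : Measure X) [IsProbabilityMeasure ν]
    (hν : ∀ ψ : C(X, ℝ),
      ∫ x, (∑ y ∈ (hfin x).toFinset, Real.exp (φ y) * ψ y) ∂ν = lam * ∫ x, ψ x ∂ν)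
    (h : X → ℝ) (hh : Continuous h) (hh0 : ∀ x, 0 ≤ h x)
    (heig : ∀ x, (∑ y ∈ (hfin x).toFinset, Real.exp (φ y) * h y) = lam * h x) :
    (∀ ψ : C(X, ℝ),
      ∫ x, ψ (G x) ∂(ν.withDensity fun x => ENNReal.ofReal (h x)) =
        ∫ x, ψ x ∂(ν.withDensity fun x => ENNReal.ofReal (h x)))
    ∧ Measure.map G (ν.withDensity fun x => ENNReal.ofReal (h x)) =
        ν.withDensity fun x => ENNReal.ofReal (h x) := by
  set μ := ν.withDensity fun x => ENNReal.ofReal (h x) with hμ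
  have invariant (ψ : C(X, ℝ)) : ∫ x, ψ (G x) ∂μ = ∫ x, ψ x ∂μ := by
    simp only [hμ, integral_withDensity_ofReal hh.measurable hh0, mul_comm (h _)]
    exact integral_comp_mul_eq_of_eigen hG hfin hlam.ne' hν hh heig ψ
  have : IsFiniteMeasure μ := isFiniteMeasure_withDensity_ofReal
    (hh.integrable_of_hasCompactSupport (.of_compactSpace h)).hasFiniteIntegral
  exact ⟨invariant, μ.map_eq_self_of_forall_integral_comp_eq hG
    fun ψ => invariant ψ.toContinuousMap⟩

/-- If `ν` is an eigenmeasure of the dual transfer operator (`∫ L_φψ dν = λ∫ψ dν` for all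
continuous `ψ`) and `h ≥ 0` is a continuous eigenfunction (`L_φh = λh`), then the measure
`μ = h·ν` is invariant under `G`. -/
theorem eigen_density_measure_invariant {X : Type*} [MetricSpace X] [CompactSpace X]
    [MeasurableSpace X] [BorelSpace X]
    (G : X → X) (hG : Continuous G) (hsurj : Function.Surjective G)
    (hfin : ∀ x : X, (G ⁻¹' {x}).Finite)
    (φ : X → ℝ) (hφ : Continuous φ) (lam : ℝ) (hlam : 0 < lam)
    (ν : Measure X) [IsProbabilityMeasure ν]
    (hν : ∀ ψ : C(X, ℝ),
      ∫ x, (∑ y ∈ (hfin x).toFinset, Real.exp (φ y) * ψ y) ∂ν = lam * ∫ x, ψ x ∂ν)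
    (h : X → ℝ) (hh : Continuous h) (hh0 : ∀ x, 0 ≤ h x)
    (heig : ∀ x, (∑ y ∈ (hfin x).toFinset, Real.exp (φ y) * h y) = lam * h x) :
    (∀ ψ : C(X, ℝ),
      ∫ x, ψ (G x) ∂(ν.withDensity fun x => ENNReal.ofReal (h x)) =
        ∫ x, ψ x ∂(ν.withDensity fun x => ENNReal.ofReal (h x)))
    ∧ Measure.map G (ν.withDensity fun x => ENNReal.ofReal (h x)) =
        ν.withDensity fun x => ENNReal.ofReal (h x) :=
  eigen_density_measure_invariant_general G hG hfin φ lam hlam ν hν h hh hh0 heig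
end

section
/- Let X be a compact metric space, G : X → X a continuous surjection such that G^{-1}({x}) is finite for every x ∈ X, and η a G-invariant Borel probability measure on X (η(G^{-1}(B)) = η(B) for all Borel B). Suppose J : X → (0, ∞) is a Borel function such that η(G(A)) = ∫_A J dη for every Borel set A on which G is injective. Then for η-almost every x ∈ X, Σ_{y ∈ G^{-1}({x})} 1/J(y) = 1. -/
/-!
Every point of `X` lies at positive distance from the rest of its finite fibre, so
compactness cuts `X` into countably many Borel pieces `Aₙ` on which `G` is injective.
By the Jacobian identity, the push-forward of `η|Aₙ` under `G` has density
`tₙ = (J ∘ (G|Aₙ)⁻¹)⁻¹` on `G(Aₙ)`. Summing over `n` and using invariance gives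
`η = η.withDensity (∑ tₙ)`, so `∑ tₙ = 1` a.e.; and `∑ₙ tₙ(x) = ∑_{y ∈ G⁻¹{x}} 1 / J(y)`.
-/

open MeasureTheory Measure Set Function
open scoped ENNReal

section Partition

variable {X Y : Type*} [MetricSpace X]

def fiberSeparated (G : X → Y) (r : ℝ) : Set X :=
  {y | ∀ z, G z = G y → z = y ∨ r < dist y z}

theorem fiberSeparated_anti (G : X → Y) : Antitone (fiberSeparated G) :=
  fun _ _ hrs _ hy z hz => (hy z hz).imp_right hrs.trans_lt

theorem compl_fiberSeparated (G : X → Y) (r : ℝ) : (fiberSeparated G r)ᶜ =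
    ⋃ k : ℕ, Prod.fst '' {p : X × X | G p.2 = G p.1 ∧
      1 / (k + 1 : ℝ) ≤ dist p.1 p.2 ∧ dist p.1 p.2 ≤ r} := by
  ext y
  simp only [fiberSeparated, mem_compl_iff, mem_ofPred_eq, not_forall, not_or, not_lt,
    mem_iUnion, mem_image, Prod.exists, exists_and_right, exists_eq_right]
  constructor
  · rintro ⟨z, ⟨hz, hzy⟩, hdist⟩
    obtain ⟨k, hk⟩ := exists_nat_one_div_lt (dist_pos.2 (Ne.symm hzy))
    exact ⟨k, z, hz, hk.le, hdist⟩
  · rintro ⟨k, z, hz, hk, hdist⟩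
    refine ⟨z, ⟨hz, fun hzy => ?_⟩, hdist⟩
    subst hzy
    simp only [dist_self] at hk
    exact (Nat.one_div_pos_of_nat).not_ge hk

theorem measurableSet_fiberSeparated [CompactSpace X] [MeasurableSpace X] [BorelSpace X]
    [TopologicalSpace Y] [T2Space Y] {G : X → Y} (hG : Continuous G) (r : ℝ) :
    MeasurableSet (fiberSeparated G r) := by
  rw [← compl_compl (fiberSeparated G r), compl_fiberSeparated]
  refine (MeasurableSet.iUnion fun k => ?_).compl
  have hclosed : IsClosed {p : X × X | G p.2 = G p.1 ∧
      1 / (k + 1 : ℝ) ≤ dist p.1 p.2 ∧ dist p.1 p.2 ≤ r} :=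
    (isClosed_eq (hG.comp continuous_snd) (hG.comp continuous_fst)).inter
      ((isClosed_le continuous_const continuous_dist).inter
        (isClosed_le continuous_dist continuous_const))
  exact (hclosed.isCompact.image continuous_fst).isClosed.measurableSet

theorem exists_mem_fiberSeparated {G : X → Y} {y : X} (hfin : (G ⁻¹' {G y}).Finite) :
    ∃ r > 0, y ∈ fiberSeparated G r := by
  have hy : y ∉ G ⁻¹' {G y} \ {y} := fun h => h.2 rfl
  obtain ⟨ε, hε, hball⟩ :=
    Metric.isOpen_iff.1 (hfin.sdiff.isClosed.isOpen_compl) y hy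
  refine ⟨ε / 2, half_pos hε, fun z hz => or_iff_not_imp_left.2 fun hzy => ?_⟩
  have : z ∉ Metric.ball y ε := fun h => hball h ⟨hz, hzy⟩
  rw [Metric.mem_ball, not_lt, dist_comm] at this
  linarith

theorem injOn_fiberSeparated_inter_closedBall (G : X → Y) (c : X) (r : ℝ) :
    InjOn G (fiberSeparated G (2 * r) ∩ Metric.closedBall c r) := by
  rintro a ⟨ha, hac⟩ b ⟨-, hbc⟩ hab
  refine ((ha b hab.symm).resolve_right fun hlt => hlt.not_ge ?_).symm
  linarith [dist_triangle_right a b c, Metric.mem_closedBall.1 hac, Metric.mem_closedBall.1 hbc]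

theorem exists_measurable_injOn_partition [CompactSpace X] [Nonempty X] [MeasurableSpace X]
    [BorelSpace X] [TopologicalSpace Y] [T2Space Y] {G : X → Y} (hG : Continuous G)
    (hfin : ∀ y, (G ⁻¹' {y}).Finite) :
    ∃ A : ℕ → Set X, (∀ n, MeasurableSet (A n)) ∧ Pairwise (Disjoint on A) ∧
      ⋃ n, A n = univ ∧ ∀ n, InjOn G (A n) := by
  let c := TopologicalSpace.denseSeq X
  let ε : ℕ → ℝ := fun m => 1 / (m + 1)
  let B : ℕ → Set X := fun n =>
    fiberSeparated G (2 * ε n.unpair.1) ∩ Metric.closedBall (c n.unpair.2) (ε n.unpair.1)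
  have hcover : ⋃ n, B n = univ := by
    refine eq_univ_of_forall fun y => mem_iUnion.2 ?_
    obtain ⟨r, hr, hy⟩ := exists_mem_fiberSeparated (hfin (G y))
    obtain ⟨m, hm⟩ := exists_nat_one_div_lt (half_pos hr)
    obtain ⟨i, hi⟩ := (TopologicalSpace.denseRange_denseSeq X).exists_dist_lt y
      (Nat.one_div_pos_of_nat (n := m))
    refine ⟨Nat.pair m i, ?_⟩
    simp only [B, Nat.unpair_pair]
    exact ⟨fiberSeparated_anti G (by simp only [ε]; linarith) hy,
      Metric.mem_closedBall.2 hi.le⟩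
  refine ⟨disjointed B, MeasurableSet.disjointed fun n =>
      (measurableSet_fiberSeparated hG _).inter Metric.isClosed_closedBall.measurableSet,
    disjoint_disjointed B, by rw [iUnion_disjointed, hcover],
    fun n => (injOn_fiberSeparated_inter_closedBall G _ _).mono (disjointed_subset B n)⟩

end Partition

section Jacobian

variable {X Y : Type*}

noncomputable def invJacobianOn (G : X → Y) (ρ : X → ℝ≥0∞) (A : Set X) : Y → ℝ≥0∞ :=
  extend (A.domRestrict G) (fun y => (ρ y)⁻¹) 0

theorem invJacobianOn_apply_image {G : X → Y} {ρ : X → ℝ≥0∞} {A : Set X} (hinj : InjOn G A)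
    {y : X} (hy : y ∈ A) : invJacobianOn G ρ A (G y) = (ρ y)⁻¹ :=
  (injOn_iff_injective.1 hinj).extend_apply _ _ ⟨y, hy⟩

theorem invJacobianOn_of_notMem_image {G : X → Y} {ρ : X → ℝ≥0∞} {A : Set X} {x : Y}
    (hx : x ∉ G '' A) : invJacobianOn G ρ A x = 0 :=
  extend_apply' _ _ _ fun ⟨y, hy⟩ => hx ⟨y, y.2, hy⟩

theorem tsum_invJacobianOn_eq_sum_fiber {G : X → Y} {ρ : X → ℝ≥0∞} {A : ℕ → Set X}
    (hAd : Pairwise (Disjoint on A)) (hAu : ⋃ n, A n = univ) (hinj : ∀ n, InjOn G (A n))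
    {x : Y} (hfin : (G ⁻¹' {x}).Finite) :
    ∑' n, invJacobianOn G ρ (A n) x = ∑ y ∈ hfin.toFinset, (ρ y)⁻¹ := by
  classical
  have hpiece n : invJacobianOn G ρ (A n) x =
      ∑ y ∈ hfin.toFinset, (A n).indicator (fun y => (ρ y)⁻¹) y := by
    by_cases hx : x ∈ G '' A n
    · obtain ⟨y₀, hy₀, rfl⟩ := hx
      rw [invJacobianOn_apply_image (hinj n) hy₀, Finset.sum_eq_single_of_mem y₀ (by simp),
        indicator_of_mem hy₀]
      exact fun y hy hne =>
        indicator_of_notMem (fun hyA => hne (hinj n hyA hy₀ (by simpa using hy))) _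
    · rw [invJacobianOn_of_notMem_image hx, eq_comm]
      refine Finset.sum_eq_zero fun y hy => indicator_of_notMem (fun hyA => hx ?_) _
      exact ⟨y, hyA, by simpa using hy⟩
  have hcover y : ∑' n, (A n).indicator (fun y => (ρ y)⁻¹) y = (ρ y)⁻¹ := by
    obtain ⟨n₀, hn₀⟩ := mem_iUnion.1 (hAu ▸ mem_univ y)
    rw [tsum_eq_single n₀ fun n hn => indicator_of_notMem
      (disjoint_left.1 (hAd hn.symm) hn₀) _, indicator_of_mem hn₀]
  simp_rw [hpiece]
  rw [Summable.tsum_finsetSum fun _ _ => ENNReal.summable]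
  exact Finset.sum_congr rfl fun y _ => hcover y

variable [MeasurableSpace X] [MeasurableSpace Y]

theorem withDensity_map_eq_map_withDensity_comp {μ : Measure X} {f : X → Y} {g : Y → ℝ≥0∞}
    (hf : Measurable f) (hg : Measurable g) :
    (μ.map f).withDensity g = (μ.withDensity (g ∘ f)).map f := by
  ext s hs
  rw [withDensity_apply _ hs, map_apply hf hs, withDensity_apply _ (hf hs),
    setLIntegral_map hs hg hf, comp_def]

theorem map_withDensity_restrict_eq_restrict_image {μ : Measure X} {ν : Measure Y} {G : X → Y}
    {ρ : X → ℝ≥0∞} {A : Set X} (hG : Measurable G) (hA : MeasurableSet A)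
    (hJac : ∀ B, MeasurableSet B → B ⊆ A → ν (G '' B) = ∫⁻ x in B, ρ x ∂μ) :
    ((μ.restrict A).withDensity ρ).map G = ν.restrict (G '' A) := by
  ext B hB
  rw [map_apply hG hB, withDensity_apply _ (hG hB), restrict_restrict (hG hB),
    ← hJac _ ((hG hB).inter hA) inter_subset_right, image_preimage_inter, restrict_apply hB]

theorem measurable_invJacobianOn {G : X → Y} {ρ : X → ℝ≥0∞} {A : Set X}
    (hGA : MeasurableEmbedding (A.domRestrict G)) (hρ : Measurable ρ) :
    Measurable (invJacobianOn G ρ A) :=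
  hGA.measurable_extend (hρ.comp measurable_subtype_coe).inv measurable_const

theorem map_restrict_eq_withDensity_invJacobianOn {μ : Measure X} {ν : Measure Y} {G : X → Y}
    {ρ : X → ℝ≥0∞} {A : Set X} (hG : Measurable G) (hA : MeasurableSet A)
    (hGA : MeasurableEmbedding (A.domRestrict G)) (hρ : Measurable ρ)
    (hρ0 : ∀ x ∈ A, ρ x ≠ 0) (hρ_top : ∀ x ∈ A, ρ x ≠ ∞)
    (hjac : ((μ.restrict A).withDensity ρ).map G = ν.restrict (G '' A)) :
    (μ.restrict A).map G = ν.withDensity (invJacobianOn G ρ A) := by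
  have hinj : InjOn G A := injOn_iff_injective.2 hGA.injective
  have ht := measurable_invJacobianOn hGA hρ
  have hindicator : (G '' A).indicator (invJacobianOn G ρ A) = invJacobianOn G ρ A :=
    indicator_eq_self.2 fun x hx => by_contra fun h => hx (invJacobianOn_of_notMem_image h)
  have hone : ρ * (invJacobianOn G ρ A ∘ G) =ᵐ[μ.restrict A] 1 := by
    filter_upwards [ae_restrict_mem hA] with y hy
    simp [invJacobianOn_apply_image hinj hy, ENNReal.mul_inv_cancel (hρ0 y hy) (hρ_top y hy)]
  have hrange : G '' A = range (A.domRestrict G) := by ext; simp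
  rw [← hindicator, withDensity_indicator (hrange ▸ hGA.measurableSet_range), ← hjac,
    withDensity_map_eq_map_withDensity_comp hG ht, ← withDensity_mul _ hρ (ht.comp hG),
    withDensity_congr_ae hone, withDensity_one]

theorem withDensity_tsum_invJacobianOn {μ : Measure X} {ν : Measure Y} {G : X → Y}
    {ρ : X → ℝ≥0∞} {A : ℕ → Set X} (hG : Measurable G) (hA : ∀ n, MeasurableSet (A n))
    (hAd : Pairwise (Disjoint on A)) (hAu : ⋃ n, A n = univ)
    (hGA : ∀ n, MeasurableEmbedding ((A n).domRestrict G)) (hρ : Measurable ρ)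
    (hρ0 : ∀ x, ρ x ≠ 0) (hρ_top : ∀ x, ρ x ≠ ∞)
    (hjac : ∀ n, ((μ.restrict (A n)).withDensity ρ).map G = ν.restrict (G '' A n)) :
    ν.withDensity (∑' n, invJacobianOn G ρ (A n)) = μ.map G := by
  have hpiece n := map_restrict_eq_withDensity_invJacobianOn hG (hA n) (hGA n) hρ
    (fun x _ => hρ0 x) (fun x _ => hρ_top x) (hjac n)
  rw [withDensity_tsum fun n => measurable_invJacobianOn (hGA n) hρ]
  calc sum (fun n => ν.withDensity (invJacobianOn G ρ (A n)))
      = sum (fun n => (μ.restrict (A n)).map G) := by simp_rw [hpiece]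
    _ = μ.map G := by
      rw [← map_sum hG.aemeasurable, ← restrict_iUnion hAd hA, hAu, restrict_univ]

theorem ae_tsum_invJacobianOn_eq_one {μ : Measure X} [SigmaFinite μ] {G : X → X}
    {ρ : X → ℝ≥0∞} {A : ℕ → Set X} (hG : Measurable G) (hA : ∀ n, MeasurableSet (A n))
    (hAd : Pairwise (Disjoint on A)) (hAu : ⋃ n, A n = univ)
    (hGA : ∀ n, MeasurableEmbedding ((A n).domRestrict G)) (hρ : Measurable ρ)
    (hρ0 : ∀ x, ρ x ≠ 0) (hρ_top : ∀ x, ρ x ≠ ∞) (hmap : μ.map G = μ)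
    (hJac : ∀ n B, MeasurableSet B → B ⊆ A n → μ (G '' B) = ∫⁻ x in B, ρ x ∂μ) :
    ∀ᵐ x ∂μ, ∑' n, invJacobianOn G ρ (A n) x = 1 := by
  have hdensity : μ.withDensity (∑' n, invJacobianOn G ρ (A n)) = μ.withDensity 1 := by
    conv_rhs => rw [withDensity_one, ← hmap]
    exact withDensity_tsum_invJacobianOn hG hA hAd hAu hGA hρ hρ0 hρ_top fun n =>
      map_withDensity_restrict_eq_restrict_image hG (hA n) (hJac n)
  have hmeas : Measurable (∑' n, invJacobianOn G ρ (A n)) :=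
    .tsum' fun n => measurable_invJacobianOn (hGA n) hρ
  filter_upwards [(withDensity_eq_iff_of_sigmaFinite hmeas.aemeasurable
    measurable_one.aemeasurable).1 hdensity] with x hx
  rwa [tsum_apply (Pi.summable.2 fun _ => ENNReal.summable)] at hx

end Jacobian

theorem sum_inv_jacobian_eq_one_general {X : Type*} [MetricSpace X] [CompactSpace X]
    [MeasurableSpace X] [BorelSpace X]
    (G : X → X) (hG : Continuous G)
    (hfin : ∀ x : X, (G ⁻¹' {x}).Finite)
    (η : Measure X) [IsProbabilityMeasure η]
    (hinv : ∀ B : Set X, MeasurableSet B → η (G ⁻¹' B) = η B)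
    (J : X → ℝ) (hJm : Measurable J) (hJ0 : ∀ x, 0 < J x)
    (hJac : ∀ A : Set X, MeasurableSet A → Set.InjOn G A →
      η (G '' A) = ∫⁻ x in A, ENNReal.ofReal (J x) ∂η) :
    ∀ᵐ x ∂η, ∑ y ∈ (hfin x).toFinset, 1 / J y = 1 := by
  have := nonempty_of_isProbabilityMeasure η
  obtain ⟨A, hAm, hAd, hAu, hAinj⟩ := exists_measurable_injOn_partition hG hfin
  have hmap : η.map G = η := ext fun B hB => by rw [map_apply hG.measurable hB, hinv B hB]
  filter_upwards [ae_tsum_invJacobianOn_eq_one hG.measurable hAm hAd hAu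
    (fun n => hG.continuousOn.measurableEmbedding (hAm n) (hAinj n)) hJm.ennreal_ofReal
    (fun x => (ENNReal.ofReal_pos.2 (hJ0 x)).ne') (fun _ => ENNReal.ofReal_ne_top) hmap
    fun n B hB hBA => hJac B hB ((hAinj n).mono hBA)] with x hx
  rw [tsum_invJacobianOn_eq_sum_fiber hAd hAu hAinj (hfin x)] at hx
  simp_rw [← ENNReal.ofReal_inv_of_pos (hJ0 _)] at hx
  rw [← ENNReal.ofReal_sum_of_nonneg fun y _ => (inv_pos.2 (hJ0 y)).le,
    ENNReal.ofReal_eq_one] at hx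
  simpa only [one_div] using hx

/-- If `η` is a `G`-invariant Borel probability measure and `J > 0` is a Jacobian of `η`
with respect to `G`, then for `η`-almost every `x`, `Σ_{y ∈ G^{-1}(x)} 1/J(y) = 1`. -/
theorem sum_inv_jacobian_eq_one {X : Type*} [MetricSpace X] [CompactSpace X]
    [MeasurableSpace X] [BorelSpace X]
    (G : X → X) (hG : Continuous G) (hsurj : Function.Surjective G)
    (hfin : ∀ x : X, (G ⁻¹' {x}).Finite)
    (η : Measure X) [IsProbabilityMeasure η]
    (hinv : ∀ B : Set X, MeasurableSet B → η (G ⁻¹' B) = η B)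
    (J : X → ℝ) (hJm : Measurable J) (hJ0 : ∀ x, 0 < J x)
    (hJac : ∀ A : Set X, MeasurableSet A → Set.InjOn G A →
      η (G '' A) = ∫⁻ x in A, ENNReal.ofReal (J x) ∂η) :
    ∀ᵐ x ∂η, ∑ y ∈ (hfin x).toFinset, 1 / J y = 1 :=
  sum_inv_jacobian_eq_one_general G hG hfin η hinv J hJm hJ0 hJac
end
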